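/- arXiv:2604.04260 — 3 statements merged into one kernel-verified Lean document; each statement's English description precedes it below -/
import Mathlib

section
/- Undecidability of RDAF termination (Theorem 5): the predicate P on ℕ defined by P(n) = 'flooding on the triangle graph with source g0 under the delay function d_{e,x} terminates, where e = Nat.Partrec.Code.ofNat (Nat.unpair n).1 and x = (Nat.unpair n).2' is not a computable predicate (¬ ComputablePred P): there is no algorithm that decides, given a code of a computable adversary of this form, whether flooding terminates. -/
open scoped Classical

/-- The state of a node in the RDAF protocol: message possession `hasMsg`,
source set `src` and destination set `dst`. -/
structure RDAFState (V : Type*) where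
  hasMsg : Prop
  src : Set V
  dst : Set V

namespace RDAF

variable {V : Type*}

/-- Initial configuration: the source has the message and destination set `N(g0)`. -/
noncomputable def init (G : SimpleGraph V) (g0 : V) : V → RDAFState V := fun u =>
  if u = g0 then ⟨True, ∅, G.neighborSet g0⟩ else ⟨False, ∅, ∅⟩

/-- One round of state evolution: from the states at round `j` to the states at round `j+1`,
under delay function `d` (where `d j v e = true` means transmission from `v` along `e` is
blocked in round `j`). -/
noncomputable def step (G : SimpleGraph V) (d : ℕ → V → Sym2 V → Bool) (j : ℕ)
    (st : V → RDAFState V) : V → RDAFState V := fun u =>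
  let s' : Set V :=
    {v | G.Adj v u ∧ (st v).hasMsg ∧ u ∈ (st v).dst ∧ d (j + 1) v s(v, u) = false}
  let t' : Set V :=
    if s'.Nonempty then G.neighborSet u \ s'
    else if (st u).hasMsg then {v | v ∈ (st u).dst ∧ d (j + 1) u s(u, v) = true}
    else ∅
  ⟨s'.Nonempty ∨ t'.Nonempty, s', t'⟩

/-- The state `S(j, u)` of every node `u` at round `j`. -/
noncomputable def stateAt (G : SimpleGraph V) (g0 : V) (d : ℕ → V → Sym2 V → Bool) :
    ℕ → V → RDAFState V
  | 0 => init G g0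
  | j + 1 => step G d j (stateAt G g0 d j)

/-- `M j u`: node `u` possesses the message at round `j`. -/
noncomputable def M (G : SimpleGraph V) (g0 : V) (d : ℕ → V → Sym2 V → Bool) (j : ℕ)
    (u : V) : Prop :=
  (stateAt G g0 d j u).hasMsg

/-- `srcSet j u = s(j, u)`: the source set of node `u` at round `j`. -/
noncomputable def srcSet (G : SimpleGraph V) (g0 : V) (d : ℕ → V → Sym2 V → Bool) (j : ℕ)
    (u : V) : Set V :=
  (stateAt G g0 d j u).src

/-- `destSet j u = dest(j, u)`: the destination set of node `u` at round `j`. -/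
noncomputable def destSet (G : SimpleGraph V) (g0 : V) (d : ℕ → V → Sym2 V → Bool) (j : ℕ)
    (u : V) : Set V :=
  (stateAt G g0 d j u).dst

/-- The transmission set `r(j)`: pairs `(v, {v,w})` such that `v` transmits to `w` in round `j`. -/
noncomputable def trans (G : SimpleGraph V) (g0 : V) (d : ℕ → V → Sym2 V → Bool) :
    ℕ → Set (V × Sym2 V)
  | 0 => ∅
  | j + 1 =>
    {p | ∃ v w : V, p = (v, s(v, w)) ∧ G.Adj v w ∧ M G g0 d j v ∧
      w ∈ destSet G g0 d j v ∧ d (j + 1) v s(v, w) = false}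

/-- The configuration `σ(j) = (S(j, ·), r(j))` at round `j`. -/
noncomputable def config (G : SimpleGraph V) (g0 : V) (d : ℕ → V → Sym2 V → Bool) (j : ℕ) :
    (V → RDAFState V) × Set (V × Sym2 V) :=
  (stateAt G g0 d j, trans G g0 d j)

/-- The finite delay property: every node-edge pair is allowed to transmit infinitely often. -/
def FiniteDelay (G : SimpleGraph V) (d : ℕ → V → Sym2 V → Bool) : Prop :=
  ∀ v : V, ∀ e ∈ G.edgeSet, v ∈ e → ∀ j : ℕ, ∃ j' ≥ j, d j' v e = false

/-- Flooding has terminated by round `t`: no node has the message at round `t`. -/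
def TerminatedBy (G : SimpleGraph V) (g0 : V) (d : ℕ → V → Sym2 V → Bool) (t : ℕ) : Prop :=
  ∀ v : V, ¬ M G g0 d t v

/-- Flooding terminates: it has terminated by some round. -/
def Terminates (G : SimpleGraph V) (g0 : V) (d : ℕ → V → Sym2 V → Bool) : Prop :=
  ∃ t : ℕ, TerminatedBy G g0 d t

/-- A schedule is periodic infinite with parameters `(c, l)`. -/
def PeriodicInfinite (G : SimpleGraph V) (g0 : V) (d : ℕ → V → Sym2 V → Bool)
    (c l : ℕ) : Prop :=
  1 ≤ l ∧ (∀ j : ℕ, c ≤ j → config G g0 d j = config G g0 d (j + l)) ∧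
    ∃ k < l, (trans G g0 d (c + k)).Nonempty

end RDAF

namespace RDAF

variable {V : Type*}

/-- The triangle graph on the vertices `g0, A, B`. -/
def triangle (g0 A B : V) : SimpleGraph V :=
  SimpleGraph.fromEdgeSet {s(g0, A), s(A, B), s(B, g0)}

/-- The basic delay function `d0` on the triangle. -/
noncomputable def d0 (g0 A B : V) : ℕ → V → Sym2 V → Bool := fun j _ e =>
  if (j % 3 = 0 ∧ e ≠ s(g0, B)) ∨ (j % 3 = 1 ∧ e ≠ s(g0, A)) ∨ (j % 3 = 2 ∧ e ≠ s(A, B))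
  then true else false

end RDAF

namespace RDAF

/-- The delay function `d_{e,x}` on the triangle: no delays from the moment the code `cde`
halts on input `x` (within `j` steps); the basic delay function `d0` otherwise. -/
noncomputable def dEX {V : Type*} (g0 A B : V) (cde : Nat.Partrec.Code) (x : ℕ) :
    ℕ → V → Sym2 V → Bool := fun j u e =>
  if Nat.Partrec.Code.evaln j cde x ≠ none then false else d0 g0 A B j u e

end RDAF
namespace RDAF

section Tri

variable {V : Type*} (g0 A B : V) (d : ℕ → V → Sym2 V → Bool)

/-- Tracked data: message flags and destination sets of the three nodes. -/
def Inv (m : ℕ) (mg ma mb : Prop) (tg ta tb : Set V) : Prop :=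
  ((stateAt (triangle g0 A B) g0 d m g0).hasMsg ↔ mg) ∧
  ((stateAt (triangle g0 A B) g0 d m A).hasMsg ↔ ma) ∧
  ((stateAt (triangle g0 A B) g0 d m B).hasMsg ↔ mb) ∧
  (stateAt (triangle g0 A B) g0 d m g0).dst = tg ∧
  (stateAt (triangle g0 A B) g0 d m A).dst = ta ∧
  (stateAt (triangle g0 A B) g0 d m B).dst = tb

variable (hAB : A ≠ B) (hBg : B ≠ g0) (hgA : g0 ≠ A)
  (hcover : ∀ u : V, u = g0 ∨ u = A ∨ u = B)

include hAB hBg hgA in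
lemma tri_adj (x y : V) :
    (triangle g0 A B).Adj x y ↔
      (x = g0 ∧ y = A) ∨ (x = A ∧ y = g0) ∨ (x = A ∧ y = B) ∨ (x = B ∧ y = A) ∨
      (x = B ∧ y = g0) ∨ (x = g0 ∧ y = B) := by
  have h1 := hAB; have h2 := hBg; have h3 := hgA
  constructor
  · rintro h
    rw [triangle, SimpleGraph.fromEdgeSet_adj] at h
    obtain ⟨hm, hne⟩ := h
    simp only [Set.mem_insert_iff, Set.mem_singleton_iff, Sym2.eq_iff] at hm
    tauto
  · rintro h
    rw [triangle, SimpleGraph.fromEdgeSet_adj]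
    simp only [Set.mem_insert_iff, Set.mem_singleton_iff, Sym2.eq_iff]
    rcases h with ⟨rfl,rfl⟩|⟨rfl,rfl⟩|⟨rfl,rfl⟩|⟨rfl,rfl⟩|⟨rfl,rfl⟩|⟨rfl,rfl⟩ <;> tauto

include hAB hBg hgA hcover in
lemma tri_nbr_g0 : (triangle g0 A B).neighborSet g0 = {A, B} := by
  ext v
  simp only [SimpleGraph.mem_neighborSet, tri_adj g0 A B hAB hBg hgA,
    Set.mem_insert_iff, Set.mem_singleton_iff]
  rcases hcover v with rfl|rfl|rfl <;> tauto

include hAB hBg hgA hcover in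
lemma tri_nbr_A : (triangle g0 A B).neighborSet A = {g0, B} := by
  ext v
  simp only [SimpleGraph.mem_neighborSet, tri_adj g0 A B hAB hBg hgA,
    Set.mem_insert_iff, Set.mem_singleton_iff]
  rcases hcover v with rfl|rfl|rfl <;> tauto

include hAB hBg hgA hcover in
lemma tri_nbr_B : (triangle g0 A B).neighborSet B = {g0, A} := by
  ext v
  simp only [SimpleGraph.mem_neighborSet, tri_adj g0 A B hAB hBg hgA,
    Set.mem_insert_iff, Set.mem_singleton_iff]
  rcases hcover v with rfl|rfl|rfl <;> tauto

end Tri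

end RDAF
namespace RDAF

section Tri2

variable {V : Type*} (g0 A B : V) (d : ℕ → V → Sym2 V → Bool)
variable (hAB : A ≠ B) (hBg : B ≠ g0) (hgA : g0 ≠ A)
  (hcover : ∀ u : V, u = g0 ∨ u = A ∨ u = B)

include hAB hBg hgA hcover in
lemma Inv.step' {m : ℕ} {mg ma mb : Prop} {tg ta tb : Set V}
    (h : Inv g0 A B d m mg ma mb tg ta tb) :
    Inv g0 A B d (m + 1)
      (({v : V | (v = A ∧ ma ∧ g0 ∈ ta ∧ d (m+1) A s(A, g0) = false) ∨
          (v = B ∧ mb ∧ g0 ∈ tb ∧ d (m+1) B s(B, g0) = false)} : Set V).Nonempty ∨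
        (if ({v : V | (v = A ∧ ma ∧ g0 ∈ ta ∧ d (m+1) A s(A, g0) = false) ∨
          (v = B ∧ mb ∧ g0 ∈ tb ∧ d (m+1) B s(B, g0) = false)} : Set V).Nonempty
         then ({A, B} : Set V) \ {v : V | (v = A ∧ ma ∧ g0 ∈ ta ∧ d (m+1) A s(A, g0) = false) ∨
          (v = B ∧ mb ∧ g0 ∈ tb ∧ d (m+1) B s(B, g0) = false)}
         else if mg then {v | v ∈ tg ∧ d (m+1) g0 s(g0, v) = true} else ∅).Nonempty)
      (({v : V | (v = g0 ∧ mg ∧ A ∈ tg ∧ d (m+1) g0 s(g0, A) = false) ∨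
          (v = B ∧ mb ∧ A ∈ tb ∧ d (m+1) B s(B, A) = false)} : Set V).Nonempty ∨
        (if ({v : V | (v = g0 ∧ mg ∧ A ∈ tg ∧ d (m+1) g0 s(g0, A) = false) ∨
          (v = B ∧ mb ∧ A ∈ tb ∧ d (m+1) B s(B, A) = false)} : Set V).Nonempty
         then ({g0, B} : Set V) \ {v : V | (v = g0 ∧ mg ∧ A ∈ tg ∧ d (m+1) g0 s(g0, A) = false) ∨
          (v = B ∧ mb ∧ A ∈ tb ∧ d (m+1) B s(B, A) = false)}
         else if ma then {v | v ∈ ta ∧ d (m+1) A s(A, v) = true} else ∅).Nonempty)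
      (({v : V | (v = g0 ∧ mg ∧ B ∈ tg ∧ d (m+1) g0 s(g0, B) = false) ∨
          (v = A ∧ ma ∧ B ∈ ta ∧ d (m+1) A s(A, B) = false)} : Set V).Nonempty ∨
        (if ({v : V | (v = g0 ∧ mg ∧ B ∈ tg ∧ d (m+1) g0 s(g0, B) = false) ∨
          (v = A ∧ ma ∧ B ∈ ta ∧ d (m+1) A s(A, B) = false)} : Set V).Nonempty
         then ({g0, A} : Set V) \ {v : V | (v = g0 ∧ mg ∧ B ∈ tg ∧ d (m+1) g0 s(g0, B) = false) ∨
          (v = A ∧ ma ∧ B ∈ ta ∧ d (m+1) A s(A, B) = false)}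
         else if mb then {v | v ∈ tb ∧ d (m+1) B s(B, v) = true} else ∅).Nonempty)
      (if ({v : V | (v = A ∧ ma ∧ g0 ∈ ta ∧ d (m+1) A s(A, g0) = false) ∨
          (v = B ∧ mb ∧ g0 ∈ tb ∧ d (m+1) B s(B, g0) = false)} : Set V).Nonempty
         then ({A, B} : Set V) \ {v : V | (v = A ∧ ma ∧ g0 ∈ ta ∧ d (m+1) A s(A, g0) = false) ∨
          (v = B ∧ mb ∧ g0 ∈ tb ∧ d (m+1) B s(B, g0) = false)}
         else if mg then {v | v ∈ tg ∧ d (m+1) g0 s(g0, v) = true} else ∅)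
      (if ({v : V | (v = g0 ∧ mg ∧ A ∈ tg ∧ d (m+1) g0 s(g0, A) = false) ∨
          (v = B ∧ mb ∧ A ∈ tb ∧ d (m+1) B s(B, A) = false)} : Set V).Nonempty
         then ({g0, B} : Set V) \ {v : V | (v = g0 ∧ mg ∧ A ∈ tg ∧ d (m+1) g0 s(g0, A) = false) ∨
          (v = B ∧ mb ∧ A ∈ tb ∧ d (m+1) B s(B, A) = false)}
         else if ma then {v | v ∈ ta ∧ d (m+1) A s(A, v) = true} else ∅)
      (if ({v : V | (v = g0 ∧ mg ∧ B ∈ tg ∧ d (m+1) g0 s(g0, B) = false) ∨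
          (v = A ∧ ma ∧ B ∈ ta ∧ d (m+1) A s(A, B) = false)} : Set V).Nonempty
         then ({g0, A} : Set V) \ {v : V | (v = g0 ∧ mg ∧ B ∈ tg ∧ d (m+1) g0 s(g0, B) = false) ∨
          (v = A ∧ ma ∧ B ∈ ta ∧ d (m+1) A s(A, B) = false)}
         else if mb then {v | v ∈ tb ∧ d (m+1) B s(B, v) = true} else ∅) := by
  obtain ⟨h1, h2, h3, h4, h5, h6⟩ := h
  have hBA := hAB.symm; have hgB := hBg.symm; have hAg := hgA.symm
  have EG : {v : V | (triangle g0 A B).Adj v g0 ∧ (stateAt (triangle g0 A B) g0 d m v).hasMsg ∧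
      g0 ∈ (stateAt (triangle g0 A B) g0 d m v).dst ∧ d (m+1) v s(v, g0) = false} =
      {v : V | (v = A ∧ ma ∧ g0 ∈ ta ∧ d (m+1) A s(A, g0) = false) ∨
          (v = B ∧ mb ∧ g0 ∈ tb ∧ d (m+1) B s(B, g0) = false)} := by
    ext v
    rcases hcover v with hv | hv | hv <;> rw [hv] <;>
      simp [tri_adj g0 A B hAB hBg hgA, h1, h2, h3, h4, h5, h6, hAB, hBg, hgA, hBA, hgB, hAg]
  have EA : {v : V | (triangle g0 A B).Adj v A ∧ (stateAt (triangle g0 A B) g0 d m v).hasMsg ∧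
      A ∈ (stateAt (triangle g0 A B) g0 d m v).dst ∧ d (m+1) v s(v, A) = false} =
      {v : V | (v = g0 ∧ mg ∧ A ∈ tg ∧ d (m+1) g0 s(g0, A) = false) ∨
          (v = B ∧ mb ∧ A ∈ tb ∧ d (m+1) B s(B, A) = false)} := by
    ext v
    rcases hcover v with hv | hv | hv <;> rw [hv] <;>
      simp [tri_adj g0 A B hAB hBg hgA, h1, h2, h3, h4, h5, h6, hAB, hBg, hgA, hBA, hgB, hAg]
  have EB : {v : V | (triangle g0 A B).Adj v B ∧ (stateAt (triangle g0 A B) g0 d m v).hasMsg ∧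
      B ∈ (stateAt (triangle g0 A B) g0 d m v).dst ∧ d (m+1) v s(v, B) = false} =
      {v : V | (v = g0 ∧ mg ∧ B ∈ tg ∧ d (m+1) g0 s(g0, B) = false) ∨
          (v = A ∧ ma ∧ B ∈ ta ∧ d (m+1) A s(A, B) = false)} := by
    ext v
    rcases hcover v with hv | hv | hv <;> rw [hv] <;>
      simp [tri_adj g0 A B hAB hBg hgA, h1, h2, h3, h4, h5, h6, hAB, hBg, hgA, hBA, hgB, hAg]
  refine ⟨?_, ?_, ?_, ?_, ?_, ?_⟩ <;>
    simp only [stateAt, step, EG, EA, EB, h1, h2, h3, h4, h5, h6,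
      tri_nbr_g0 g0 A B hAB hBg hgA hcover, tri_nbr_A g0 A B hAB hBg hgA hcover,
      tri_nbr_B g0 A B hAB hBg hgA hcover]

end Tri2

end RDAF
namespace RDAF

section Tri3

variable {V : Type*} (g0 A B : V) (d : ℕ → V → Sym2 V → Bool)
variable (hAB : A ≠ B) (hBg : B ≠ g0) (hgA : g0 ≠ A)
  (hcover : ∀ u : V, u = g0 ∨ u = A ∨ u = B)

lemma Inv.congr {m : ℕ} {mg ma mb mg' ma' mb' : Prop} {tg ta tb tg' ta' tb' : Set V}
    (h : Inv g0 A B d m mg ma mb tg ta tb)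
    (e1 : mg ↔ mg') (e2 : ma ↔ ma') (e3 : mb ↔ mb')
    (e4 : tg = tg') (e5 : ta = ta') (e6 : tb = tb') :
    Inv g0 A B d m mg' ma' mb' tg' ta' tb' := by
  obtain ⟨h1, h2, h3, h4, h5, h6⟩ := h
  exact ⟨h1.trans e1, h2.trans e2, h3.trans e3, h4.trans e4, h5.trans e5, h6.trans e6⟩

include hAB hBg hgA hcover in
lemma inv_zero : Inv g0 A B d 0 True False False {A, B} ∅ ∅ := by
  have hAg := hgA.symm; have hgB := hBg.symm
  refine ⟨?_, ?_, ?_, ?_, ?_, ?_⟩ <;>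
    simp [stateAt, init, hAg, hBg, tri_nbr_g0 g0 A B hAB hBg hgA hcover]

include hAB hBg hgA hcover in
lemma inv_one : Inv g0 A B (d0 g0 A B) 1 True True False {B} {B} ∅ := by
  have hBA := hAB.symm; have hgB := hBg.symm; have hAg := hgA.symm
  refine Inv.congr g0 A B _ (Inv.step' g0 A B _ hAB hBg hgA hcover
    (inv_zero g0 A B _ hAB hBg hgA hcover)) ?_ ?_ ?_ ?_ ?_ ?_
  all_goals first
    | (ext v; rcases hcover v with hv | hv | hv <;> rw [hv] <;>
        simp [d0, Set.Nonempty, Sym2.eq_iff, hAB, hBg, hgA, hBA, hgB, hAg])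
    | simp [d0, Set.Nonempty, Sym2.eq_iff, hAB, hBg, hgA, hBA, hgB, hAg]

end Tri3

end RDAF
namespace RDAF

section Tri4

variable {V : Type*} (g0 A B : V) (d : ℕ → V → Sym2 V → Bool)
variable (hAB : A ≠ B) (hBg : B ≠ g0) (hgA : g0 ≠ A)
  (hcover : ∀ u : V, u = g0 ∨ u = A ∨ u = B)

include hAB hBg hgA hcover in
lemma dstep1 {m : ℕ} (hm : (m + 1) % 3 = 2)
    (h : Inv g0 A B (d0 g0 A B) m True True False ({B} : Set V) ({B} : Set V) (∅ : Set V)) :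
    Inv g0 A B (d0 g0 A B) (m + 1) True False True ({B} : Set V) (∅ : Set V) ({g0} : Set V) := by
  have hBA := hAB.symm; have hgB := hBg.symm; have hAg := hgA.symm
  refine Inv.congr g0 A B _ (Inv.step' g0 A B _ hAB hBg hgA hcover h) ?_ ?_ ?_ ?_ ?_ ?_
  all_goals first
    | (ext v; rcases hcover v with hv | hv | hv <;> rw [hv] <;>
        simp [d0, hm, Set.Nonempty, Sym2.eq_iff, hAB, hBg, hgA, hBA, hgB, hAg])
    | simp [d0, hm, Set.Nonempty, Sym2.eq_iff, hAB, hBg, hgA, hBA, hgB, hAg]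

include hAB hBg hgA hcover in
lemma dstep2 {m : ℕ} (hm : (m + 1) % 3 = 0)
    (h : Inv g0 A B (d0 g0 A B) m True False True ({B} : Set V) (∅ : Set V) ({g0} : Set V)) :
    Inv g0 A B (d0 g0 A B) (m + 1) True False True ({A} : Set V) (∅ : Set V) ({A} : Set V) := by
  have hBA := hAB.symm; have hgB := hBg.symm; have hAg := hgA.symm
  refine Inv.congr g0 A B _ (Inv.step' g0 A B _ hAB hBg hgA hcover h) ?_ ?_ ?_ ?_ ?_ ?_
  all_goals first
    | (ext v; rcases hcover v with hv | hv | hv <;> rw [hv] <;>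
        simp [d0, hm, Set.Nonempty, Sym2.eq_iff, hAB, hBg, hgA, hBA, hgB, hAg])
    | simp [d0, hm, Set.Nonempty, Sym2.eq_iff, hAB, hBg, hgA, hBA, hgB, hAg]

include hAB hBg hgA hcover in
lemma dstep3 {m : ℕ} (hm : (m + 1) % 3 = 1)
    (h : Inv g0 A B (d0 g0 A B) m True False True ({A} : Set V) (∅ : Set V) ({A} : Set V)) :
    Inv g0 A B (d0 g0 A B) (m + 1) False True True (∅ : Set V) ({B} : Set V) ({A} : Set V) := by
  have hBA := hAB.symm; have hgB := hBg.symm; have hAg := hgA.symm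
  refine Inv.congr g0 A B _ (Inv.step' g0 A B _ hAB hBg hgA hcover h) ?_ ?_ ?_ ?_ ?_ ?_
  all_goals first
    | (ext v; rcases hcover v with hv | hv | hv <;> rw [hv] <;>
        simp [d0, hm, Set.Nonempty, Sym2.eq_iff, hAB, hBg, hgA, hBA, hgB, hAg])
    | simp [d0, hm, Set.Nonempty, Sym2.eq_iff, hAB, hBg, hgA, hBA, hgB, hAg]

include hAB hBg hgA hcover in
lemma dstep4 {m : ℕ} (hm : (m + 1) % 3 = 2)
    (h : Inv g0 A B (d0 g0 A B) m False True True (∅ : Set V) ({B} : Set V) ({A} : Set V)) :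
    Inv g0 A B (d0 g0 A B) (m + 1) False True True (∅ : Set V) ({g0} : Set V) ({g0} : Set V) := by
  have hBA := hAB.symm; have hgB := hBg.symm; have hAg := hgA.symm
  refine Inv.congr g0 A B _ (Inv.step' g0 A B _ hAB hBg hgA hcover h) ?_ ?_ ?_ ?_ ?_ ?_
  all_goals first
    | (ext v; rcases hcover v with hv | hv | hv <;> rw [hv] <;>
        simp [d0, hm, Set.Nonempty, Sym2.eq_iff, hAB, hBg, hgA, hBA, hgB, hAg])
    | simp [d0, hm, Set.Nonempty, Sym2.eq_iff, hAB, hBg, hgA, hBA, hgB, hAg]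

include hAB hBg hgA hcover in
lemma dstep5 {m : ℕ} (hm : (m + 1) % 3 = 0)
    (h : Inv g0 A B (d0 g0 A B) m False True True (∅ : Set V) ({g0} : Set V) ({g0} : Set V)) :
    Inv g0 A B (d0 g0 A B) (m + 1) True True False ({A} : Set V) ({g0} : Set V) (∅ : Set V) := by
  have hBA := hAB.symm; have hgB := hBg.symm; have hAg := hgA.symm
  refine Inv.congr g0 A B _ (Inv.step' g0 A B _ hAB hBg hgA hcover h) ?_ ?_ ?_ ?_ ?_ ?_
  all_goals first
    | (ext v; rcases hcover v with hv | hv | hv <;> rw [hv] <;>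
        simp [d0, hm, Set.Nonempty, Sym2.eq_iff, hAB, hBg, hgA, hBA, hgB, hAg])
    | simp [d0, hm, Set.Nonempty, Sym2.eq_iff, hAB, hBg, hgA, hBA, hgB, hAg]

include hAB hBg hgA hcover in
lemma dstep6 {m : ℕ} (hm : (m + 1) % 3 = 1)
    (h : Inv g0 A B (d0 g0 A B) m True True False ({A} : Set V) ({g0} : Set V) (∅ : Set V)) :
    Inv g0 A B (d0 g0 A B) (m + 1) True True False ({B} : Set V) ({B} : Set V) (∅ : Set V) := by
  have hBA := hAB.symm; have hgB := hBg.symm; have hAg := hgA.symm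
  refine Inv.congr g0 A B _ (Inv.step' g0 A B _ hAB hBg hgA hcover h) ?_ ?_ ?_ ?_ ?_ ?_
  all_goals first
    | (ext v; rcases hcover v with hv | hv | hv <;> rw [hv] <;>
        simp [d0, hm, Set.Nonempty, Sym2.eq_iff, hAB, hBg, hgA, hBA, hgB, hAg])
    | simp [d0, hm, Set.Nonempty, Sym2.eq_iff, hAB, hBg, hgA, hBA, hgB, hAg]

include hAB hBg hgA hcover in
lemma z1 {m : ℕ} (hz : ∀ (u : V) (e : Sym2 V), d (m + 1) u e = false)
    (h : Inv g0 A B d m True False False ({A, B} : Set V) (∅ : Set V) (∅ : Set V)) :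
    Inv g0 A B d (m + 1) False True True (∅ : Set V) ({B} : Set V) ({A} : Set V) := by
  have hBA := hAB.symm; have hgB := hBg.symm; have hAg := hgA.symm
  refine Inv.congr g0 A B _ (Inv.step' g0 A B _ hAB hBg hgA hcover h) ?_ ?_ ?_ ?_ ?_ ?_
  all_goals first
    | (ext v; rcases hcover v with hv | hv | hv <;> rw [hv] <;>
        simp [hz, Set.Nonempty, Sym2.eq_iff, hAB, hBg, hgA, hBA, hgB, hAg])
    | simp [hz, Set.Nonempty, Sym2.eq_iff, hAB, hBg, hgA, hBA, hgB, hAg]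

include hAB hBg hgA hcover in
lemma z2 {m : ℕ} (hz : ∀ (u : V) (e : Sym2 V), d (m + 1) u e = false)
    (h : Inv g0 A B d m False True True (∅ : Set V) ({B} : Set V) ({A} : Set V)) :
    Inv g0 A B d (m + 1) False True True (∅ : Set V) ({g0} : Set V) ({g0} : Set V) := by
  have hBA := hAB.symm; have hgB := hBg.symm; have hAg := hgA.symm
  refine Inv.congr g0 A B _ (Inv.step' g0 A B _ hAB hBg hgA hcover h) ?_ ?_ ?_ ?_ ?_ ?_
  all_goals first
    | (ext v; rcases hcover v with hv | hv | hv <;> rw [hv] <;>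
        simp [hz, Set.Nonempty, Sym2.eq_iff, hAB, hBg, hgA, hBA, hgB, hAg])
    | simp [hz, Set.Nonempty, Sym2.eq_iff, hAB, hBg, hgA, hBA, hgB, hAg]

include hAB hBg hgA hcover in
lemma z3 {m : ℕ} (hz : ∀ (u : V) (e : Sym2 V), d (m + 1) u e = false)
    (h : Inv g0 A B d m False True True (∅ : Set V) ({g0} : Set V) ({g0} : Set V)) :
    Inv g0 A B d (m + 1) True False False (∅ : Set V) (∅ : Set V) (∅ : Set V) := by
  have hBA := hAB.symm; have hgB := hBg.symm; have hAg := hgA.symm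
  refine Inv.congr g0 A B _ (Inv.step' g0 A B _ hAB hBg hgA hcover h) ?_ ?_ ?_ ?_ ?_ ?_
  all_goals first
    | (ext v; rcases hcover v with hv | hv | hv <;> rw [hv] <;>
        simp [hz, Set.Nonempty, Sym2.eq_iff, hAB, hBg, hgA, hBA, hgB, hAg])
    | simp [hz, Set.Nonempty, Sym2.eq_iff, hAB, hBg, hgA, hBA, hgB, hAg]

include hAB hBg hgA hcover in
lemma z4 {m : ℕ} (hz : ∀ (u : V) (e : Sym2 V), d (m + 1) u e = false)
    (h : Inv g0 A B d m True False False (∅ : Set V) (∅ : Set V) (∅ : Set V)) :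
    Inv g0 A B d (m + 1) False False False (∅ : Set V) (∅ : Set V) (∅ : Set V) := by
  have hBA := hAB.symm; have hgB := hBg.symm; have hAg := hgA.symm
  refine Inv.congr g0 A B _ (Inv.step' g0 A B _ hAB hBg hgA hcover h) ?_ ?_ ?_ ?_ ?_ ?_
  all_goals first
    | (ext v; rcases hcover v with hv | hv | hv <;> rw [hv] <;>
        simp [hz, Set.Nonempty, Sym2.eq_iff, hAB, hBg, hgA, hBA, hgB, hAg])
    | simp [hz, Set.Nonempty, Sym2.eq_iff, hAB, hBg, hgA, hBA, hgB, hAg]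

include hAB hBg hgA hcover in
lemma z5 {m : ℕ} (hz : ∀ (u : V) (e : Sym2 V), d (m + 1) u e = false)
    (h : Inv g0 A B d m True True False ({B} : Set V) ({B} : Set V) (∅ : Set V)) :
    Inv g0 A B d (m + 1) False False True (∅ : Set V) (∅ : Set V) (∅ : Set V) := by
  have hBA := hAB.symm; have hgB := hBg.symm; have hAg := hgA.symm
  refine Inv.congr g0 A B _ (Inv.step' g0 A B _ hAB hBg hgA hcover h) ?_ ?_ ?_ ?_ ?_ ?_
  all_goals first
    | (ext v; rcases hcover v with hv | hv | hv <;> rw [hv] <;>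
        simp [hz, Set.Nonempty, Sym2.eq_iff, hAB, hBg, hgA, hBA, hgB, hAg])
    | simp [hz, Set.Nonempty, Sym2.eq_iff, hAB, hBg, hgA, hBA, hgB, hAg]

include hAB hBg hgA hcover in
lemma z6 {m : ℕ} (hz : ∀ (u : V) (e : Sym2 V), d (m + 1) u e = false)
    (h : Inv g0 A B d m False False True (∅ : Set V) (∅ : Set V) (∅ : Set V)) :
    Inv g0 A B d (m + 1) False False False (∅ : Set V) (∅ : Set V) (∅ : Set V) := by
  have hBA := hAB.symm; have hgB := hBg.symm; have hAg := hgA.symm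
  refine Inv.congr g0 A B _ (Inv.step' g0 A B _ hAB hBg hgA hcover h) ?_ ?_ ?_ ?_ ?_ ?_
  all_goals first
    | (ext v; rcases hcover v with hv | hv | hv <;> rw [hv] <;>
        simp [hz, Set.Nonempty, Sym2.eq_iff, hAB, hBg, hgA, hBA, hgB, hAg])
    | simp [hz, Set.Nonempty, Sym2.eq_iff, hAB, hBg, hgA, hBA, hgB, hAg]

include hAB hBg hgA hcover in
lemma z7 {m : ℕ} (hz : ∀ (u : V) (e : Sym2 V), d (m + 1) u e = false)
    (h : Inv g0 A B d m True False True ({B} : Set V) (∅ : Set V) ({g0} : Set V)) :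
    Inv g0 A B d (m + 1) True False True ({A} : Set V) (∅ : Set V) ({A} : Set V) := by
  have hBA := hAB.symm; have hgB := hBg.symm; have hAg := hgA.symm
  refine Inv.congr g0 A B _ (Inv.step' g0 A B _ hAB hBg hgA hcover h) ?_ ?_ ?_ ?_ ?_ ?_
  all_goals first
    | (ext v; rcases hcover v with hv | hv | hv <;> rw [hv] <;>
        simp [hz, Set.Nonempty, Sym2.eq_iff, hAB, hBg, hgA, hBA, hgB, hAg])
    | simp [hz, Set.Nonempty, Sym2.eq_iff, hAB, hBg, hgA, hBA, hgB, hAg]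

include hAB hBg hgA hcover in
lemma z8 {m : ℕ} (hz : ∀ (u : V) (e : Sym2 V), d (m + 1) u e = false)
    (h : Inv g0 A B d m True False True ({A} : Set V) (∅ : Set V) ({A} : Set V)) :
    Inv g0 A B d (m + 1) False True False (∅ : Set V) (∅ : Set V) (∅ : Set V) := by
  have hBA := hAB.symm; have hgB := hBg.symm; have hAg := hgA.symm
  refine Inv.congr g0 A B _ (Inv.step' g0 A B _ hAB hBg hgA hcover h) ?_ ?_ ?_ ?_ ?_ ?_
  all_goals first
    | (ext v; rcases hcover v with hv | hv | hv <;> rw [hv] <;>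
        simp [hz, Set.Nonempty, Sym2.eq_iff, hAB, hBg, hgA, hBA, hgB, hAg])
    | simp [hz, Set.Nonempty, Sym2.eq_iff, hAB, hBg, hgA, hBA, hgB, hAg]

include hAB hBg hgA hcover in
lemma z9 {m : ℕ} (hz : ∀ (u : V) (e : Sym2 V), d (m + 1) u e = false)
    (h : Inv g0 A B d m False True False (∅ : Set V) (∅ : Set V) (∅ : Set V)) :
    Inv g0 A B d (m + 1) False False False (∅ : Set V) (∅ : Set V) (∅ : Set V) := by
  have hBA := hAB.symm; have hgB := hBg.symm; have hAg := hgA.symm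
  refine Inv.congr g0 A B _ (Inv.step' g0 A B _ hAB hBg hgA hcover h) ?_ ?_ ?_ ?_ ?_ ?_
  all_goals first
    | (ext v; rcases hcover v with hv | hv | hv <;> rw [hv] <;>
        simp [hz, Set.Nonempty, Sym2.eq_iff, hAB, hBg, hgA, hBA, hgB, hAg])
    | simp [hz, Set.Nonempty, Sym2.eq_iff, hAB, hBg, hgA, hBA, hgB, hAg]

include hAB hBg hgA hcover in
lemma z10 {m : ℕ} (hz : ∀ (u : V) (e : Sym2 V), d (m + 1) u e = false)
    (h : Inv g0 A B d m True True False ({A} : Set V) ({g0} : Set V) (∅ : Set V)) :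
    Inv g0 A B d (m + 1) True True False ({B} : Set V) ({B} : Set V) (∅ : Set V) := by
  have hBA := hAB.symm; have hgB := hBg.symm; have hAg := hgA.symm
  refine Inv.congr g0 A B _ (Inv.step' g0 A B _ hAB hBg hgA hcover h) ?_ ?_ ?_ ?_ ?_ ?_
  all_goals first
    | (ext v; rcases hcover v with hv | hv | hv <;> rw [hv] <;>
        simp [hz, Set.Nonempty, Sym2.eq_iff, hAB, hBg, hgA, hBA, hgB, hAg])
    | simp [hz, Set.Nonempty, Sym2.eq_iff, hAB, hBg, hgA, hBA, hgB, hAg]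

include hAB hBg hgA hcover in
lemma z11 {m : ℕ} (hz : ∀ (u : V) (e : Sym2 V), d (m + 1) u e = false)
    (h : Inv g0 A B d m False False False (∅ : Set V) (∅ : Set V) (∅ : Set V)) :
    Inv g0 A B d (m + 1) False False False (∅ : Set V) (∅ : Set V) (∅ : Set V) := by
  have hBA := hAB.symm; have hgB := hBg.symm; have hAg := hgA.symm
  refine Inv.congr g0 A B _ (Inv.step' g0 A B _ hAB hBg hgA hcover h) ?_ ?_ ?_ ?_ ?_ ?_
  all_goals first
    | (ext v; rcases hcover v with hv | hv | hv <;> rw [hv] <;>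
        simp [hz, Set.Nonempty, Sym2.eq_iff, hAB, hBg, hgA, hBA, hgB, hAg])
    | simp [hz, Set.Nonempty, Sym2.eq_iff, hAB, hBg, hgA, hBA, hgB, hAg]

end Tri4

end RDAF
namespace RDAF

section Tri5

variable {V : Type*} (g0 A B : V)
variable (hAB : A ≠ B) (hBg : B ≠ g0) (hgA : g0 ≠ A)
  (hcover : ∀ u : V, u = g0 ∨ u = A ∨ u = B)

include hAB hBg hgA hcover in
lemma six_steps {m : ℕ} (hm : m % 3 = 1)
    (h : Inv g0 A B (d0 g0 A B) m True True False ({B} : Set V) ({B} : Set V) (∅ : Set V)) :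
    Inv g0 A B (d0 g0 A B) (m + 1) True False True ({B} : Set V) (∅ : Set V) ({g0} : Set V) ∧
    Inv g0 A B (d0 g0 A B) (m + 2) True False True ({A} : Set V) (∅ : Set V) ({A} : Set V) ∧
    Inv g0 A B (d0 g0 A B) (m + 3) False True True (∅ : Set V) ({B} : Set V) ({A} : Set V) ∧
    Inv g0 A B (d0 g0 A B) (m + 4) False True True (∅ : Set V) ({g0} : Set V) ({g0} : Set V) ∧
    Inv g0 A B (d0 g0 A B) (m + 5) True True False ({A} : Set V) ({g0} : Set V) (∅ : Set V) ∧
    Inv g0 A B (d0 g0 A B) (m + 6) True True False ({B} : Set V) ({B} : Set V) (∅ : Set V) := by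
  have h1 := dstep1 g0 A B hAB hBg hgA hcover (by omega) h
  have h2 := dstep2 g0 A B hAB hBg hgA hcover (m := m + 1) (by omega) h1
  have h3 := dstep3 g0 A B hAB hBg hgA hcover (m := m + 2) (by omega) h2
  have h4 := dstep4 g0 A B hAB hBg hgA hcover (m := m + 3) (by omega) h3
  have h5 := dstep5 g0 A B hAB hBg hgA hcover (m := m + 4) (by omega) h4
  have h6 := dstep6 g0 A B hAB hBg hgA hcover (m := m + 5) (by omega) h5
  exact ⟨h1, h2, h3, h4, h5, h6⟩

include hAB hBg hgA hcover in
lemma inv_S1 (q : ℕ) :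
    Inv g0 A B (d0 g0 A B) (1 + 6 * q) True True False
      ({B} : Set V) ({B} : Set V) (∅ : Set V) := by
  induction q with
  | zero => exact inv_one g0 A B hAB hBg hgA hcover
  | succ q ih =>
    have h6 := (six_steps g0 A B hAB hBg hgA hcover (by omega) ih).2.2.2.2.2
    have he : 1 + 6 * (q + 1) = 1 + 6 * q + 6 := by omega
    rw [he]
    exact h6

include hAB hBg hgA hcover in
lemma alive_d0 (t : ℕ) :
    ∃ u : V, (stateAt (triangle g0 A B) g0 (d0 g0 A B) t u).hasMsg := by
  rcases Nat.eq_zero_or_pos t with rfl | ht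
  · exact ⟨g0, (inv_zero g0 A B _ hAB hBg hgA hcover).1.mpr trivial⟩
  · obtain ⟨q, i, hi, htq⟩ : ∃ q i, i < 6 ∧ t = 1 + 6 * q + i :=
      ⟨(t - 1) / 6, (t - 1) % 6, Nat.mod_lt _ (by norm_num), by omega⟩
    have hs1 := inv_S1 g0 A B hAB hBg hgA hcover q
    have h6 := six_steps g0 A B hAB hBg hgA hcover (by omega) hs1
    subst htq
    interval_cases i
    · exact ⟨g0, hs1.1.mpr trivial⟩
    · exact ⟨g0, h6.1.1.mpr trivial⟩
    · exact ⟨g0, h6.2.1.1.mpr trivial⟩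
    · exact ⟨A, h6.2.2.1.2.1.mpr trivial⟩
    · exact ⟨A, h6.2.2.2.1.2.1.mpr trivial⟩
    · exact ⟨g0, h6.2.2.2.2.1.1.mpr trivial⟩

include hAB hBg hgA hcover in
lemma not_term_d0 : ¬ Terminates (triangle g0 A B) g0 (d0 g0 A B) := by
  rintro ⟨t, ht⟩
  obtain ⟨u, hu⟩ := alive_d0 g0 A B hAB hBg hgA hcover t
  exact ht u hu

end Tri5

lemma stateAt_congr {V : Type*} (G : SimpleGraph V) (g0 : V)
    (d d' : ℕ → V → Sym2 V → Bool) :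
    ∀ m : ℕ, (∀ j, j ≤ m → d j = d' j) → stateAt G g0 d m = stateAt G g0 d' m
  | 0, _ => rfl
  | m + 1, h => by
    have ih := stateAt_congr G g0 d d' m fun j hj => h j (hj.trans (Nat.le_succ m))
    show step G d m (stateAt G g0 d m) = step G d' m (stateAt G g0 d' m)
    rw [ih]
    unfold step
    simp only [h (m + 1) le_rfl]

lemma Inv.of_eq {V : Type*} {g0 A B : V} {d d' : ℕ → V → Sym2 V → Bool} {m : ℕ}
    {mg ma mb : Prop} {tg ta tb : Set V}
    (h : Inv g0 A B d m mg ma mb tg ta tb) (hd : ∀ j, j ≤ m → d j = d' j) :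
    Inv g0 A B d' m mg ma mb tg ta tb := by
  unfold Inv at h ⊢
  rw [stateAt_congr (triangle g0 A B) g0 d d' m hd] at h
  exact h

section Tri6

variable {V : Type*} (g0 A B : V)
variable (hAB : A ≠ B) (hBg : B ≠ g0) (hgA : g0 ≠ A)
  (hcover : ∀ u : V, u = g0 ∨ u = A ∨ u = B)

include hAB hBg hgA hcover in
lemma not_term_of_no_halt (cde : Nat.Partrec.Code) (x : ℕ)
    (hn : ∀ k, Nat.Partrec.Code.evaln k cde x = none) :
    ¬ Terminates (triangle g0 A B) g0 (dEX g0 A B cde x) := by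
  have hdd : dEX g0 A B cde x = d0 g0 A B := by
    funext j u e
    simp [dEX, hn j]
  rw [hdd]
  exact not_term_d0 g0 A B hAB hBg hgA hcover

include hAB hBg hgA hcover in
lemma term_of_halt (cde : Nat.Partrec.Code) (x : ℕ)
    (hhalt : (Nat.Partrec.Code.eval cde x).Dom) :
    Terminates (triangle g0 A B) g0 (dEX g0 A B cde x) := by
  classical
  obtain ⟨y, hy⟩ := Part.dom_iff_mem.mp hhalt
  obtain ⟨k0, hk0⟩ := Nat.Partrec.Code.evaln_complete.mp hy
  have hex : ∃ k, (Nat.Partrec.Code.evaln k cde x).isSome := ⟨k0, by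
    rw [Option.mem_def] at hk0
    simp [hk0]⟩
  set k := Nat.find hex with hkdef
  have hk : (Nat.Partrec.Code.evaln k cde x).isSome := Nat.find_spec hex
  have hk1 : 1 ≤ k := by
    rcases Nat.eq_zero_or_pos k with hk0' | h
    · exfalso
      rw [hk0'] at hk
      simp [Nat.Partrec.Code.evaln] at hk
    · exact h
  have hmin : ∀ j, j < k → Nat.Partrec.Code.evaln j cde x = none := by
    intro j hj
    have := Nat.find_min hex hj
    simpa [Option.not_isSome_iff_eq_none] using this
  have hzero : ∀ j, k ≤ j → ∀ (u : V) (e : Sym2 V), dEX g0 A B cde x j u e = false := by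
    intro j hj u e
    obtain ⟨y', hy'⟩ := Option.isSome_iff_exists.mp hk
    have hj' : Nat.Partrec.Code.evaln j cde x = some y' :=
      Nat.Partrec.Code.evaln_mono hj hy'
    simp [dEX, hj']
  have hdle : ∀ j, j ≤ k - 1 → dEX g0 A B cde x j = d0 g0 A B j := by
    intro j hj
    funext u e
    have : Nat.Partrec.Code.evaln j cde x = none := hmin j (by omega)
    simp [dEX, this]
  set m := k - 1 with hm
  have hmk : k ≤ m + 1 := by omega
  -- zero-delay hypotheses for the four rounds after m
  have hz0 : ∀ (u : V) (e : Sym2 V), dEX g0 A B cde x (m + 1) u e = false :=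
    fun u e => hzero (m + 1) (by omega) u e
  have hz1 : ∀ (u : V) (e : Sym2 V), dEX g0 A B cde x (m + 1 + 1) u e = false :=
    fun u e => hzero (m + 1 + 1) (by omega) u e
  have hz2 : ∀ (u : V) (e : Sym2 V), dEX g0 A B cde x (m + 2 + 1) u e = false :=
    fun u e => hzero (m + 2 + 1) (by omega) u e
  have hz3 : ∀ (u : V) (e : Sym2 V), dEX g0 A B cde x (m + 3 + 1) u e = false :=
    fun u e => hzero (m + 3 + 1) (by omega) u e
  have hdead : Inv g0 A B (dEX g0 A B cde x) (m + 4) False False False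
      (∅ : Set V) (∅ : Set V) (∅ : Set V) := by
    rcases Nat.eq_zero_or_pos m with hm0 | hmpos
    · rw [hm0] at hz0 hz1 hz2 hz3 ⊢
      have i0 : Inv g0 A B (dEX g0 A B cde x) 0 True False False
          ({A, B} : Set V) (∅ : Set V) (∅ : Set V) := inv_zero g0 A B _ hAB hBg hgA hcover
      have i1 := z1 g0 A B _ hAB hBg hgA hcover (m := 0) hz0 i0
      have i2 := z2 g0 A B _ hAB hBg hgA hcover (m := 0 + 1) hz1 i1
      have i3 := z3 g0 A B _ hAB hBg hgA hcover (m := 0 + 2) hz2 i2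
      have i4 := z4 g0 A B _ hAB hBg hgA hcover (m := 0 + 3) hz3 i3
      exact i4
    · obtain ⟨q, i, hi, htq⟩ : ∃ q i, i < 6 ∧ m = 1 + 6 * q + i :=
        ⟨(m - 1) / 6, (m - 1) % 6, Nat.mod_lt _ (by norm_num), by omega⟩
      have hs1 := inv_S1 g0 A B hAB hBg hgA hcover q
      have h6 := six_steps g0 A B hAB hBg hgA hcover (by omega) hs1
      interval_cases i
      · -- S1 at m
        have hcur : Inv g0 A B (dEX g0 A B cde x) m True True False
            ({B} : Set V) ({B} : Set V) (∅ : Set V) := by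
          refine Inv.of_eq ?_ (fun j hj => (hdle j hj).symm)
          rw [htq]
          exact hs1
        have i1 := z5 g0 A B _ hAB hBg hgA hcover hz0 hcur
        have i2 := z6 g0 A B _ hAB hBg hgA hcover (m := m + 1) hz1 i1
        have i3 := z11 g0 A B _ hAB hBg hgA hcover (m := m + 2) hz2 i2
        exact z11 g0 A B _ hAB hBg hgA hcover (m := m + 3) hz3 i3
      · -- S2 at m
        have hcur : Inv g0 A B (dEX g0 A B cde x) m True False True
            ({B} : Set V) (∅ : Set V) ({g0} : Set V) := by
          refine Inv.of_eq ?_ (fun j hj => (hdle j hj).symm)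
          rw [htq]
          exact h6.1
        have i1 := z7 g0 A B _ hAB hBg hgA hcover hz0 hcur
        have i2 := z8 g0 A B _ hAB hBg hgA hcover (m := m + 1) hz1 i1
        have i3 := z9 g0 A B _ hAB hBg hgA hcover (m := m + 2) hz2 i2
        exact z11 g0 A B _ hAB hBg hgA hcover (m := m + 3) hz3 i3
      · -- S3 at m
        have hcur : Inv g0 A B (dEX g0 A B cde x) m True False True
            ({A} : Set V) (∅ : Set V) ({A} : Set V) := by
          refine Inv.of_eq ?_ (fun j hj => (hdle j hj).symm)
          rw [htq]
          exact h6.2.1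
        have i1 := z8 g0 A B _ hAB hBg hgA hcover hz0 hcur
        have i2 := z9 g0 A B _ hAB hBg hgA hcover (m := m + 1) hz1 i1
        have i3 := z11 g0 A B _ hAB hBg hgA hcover (m := m + 2) hz2 i2
        exact z11 g0 A B _ hAB hBg hgA hcover (m := m + 3) hz3 i3
      · -- S4 at m
        have hcur : Inv g0 A B (dEX g0 A B cde x) m False True True
            (∅ : Set V) ({B} : Set V) ({A} : Set V) := by
          refine Inv.of_eq ?_ (fun j hj => (hdle j hj).symm)
          rw [htq]
          exact h6.2.2.1
        have i1 := z2 g0 A B _ hAB hBg hgA hcover hz0 hcur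
        have i2 := z3 g0 A B _ hAB hBg hgA hcover (m := m + 1) hz1 i1
        have i3 := z4 g0 A B _ hAB hBg hgA hcover (m := m + 2) hz2 i2
        exact z11 g0 A B _ hAB hBg hgA hcover (m := m + 3) hz3 i3
      · -- S5 at m
        have hcur : Inv g0 A B (dEX g0 A B cde x) m False True True
            (∅ : Set V) ({g0} : Set V) ({g0} : Set V) := by
          refine Inv.of_eq ?_ (fun j hj => (hdle j hj).symm)
          rw [htq]
          exact h6.2.2.2.1
        have i1 := z3 g0 A B _ hAB hBg hgA hcover hz0 hcur
        have i2 := z4 g0 A B _ hAB hBg hgA hcover (m := m + 1) hz1 i1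
        have i3 := z11 g0 A B _ hAB hBg hgA hcover (m := m + 2) hz2 i2
        exact z11 g0 A B _ hAB hBg hgA hcover (m := m + 3) hz3 i3
      · -- S6 at m
        have hcur : Inv g0 A B (dEX g0 A B cde x) m True True False
            ({A} : Set V) ({g0} : Set V) (∅ : Set V) := by
          refine Inv.of_eq ?_ (fun j hj => (hdle j hj).symm)
          rw [htq]
          exact h6.2.2.2.2.1
        have i1 := z10 g0 A B _ hAB hBg hgA hcover hz0 hcur
        have i2 := z5 g0 A B _ hAB hBg hgA hcover (m := m + 1) hz1 i1
        have i3 := z6 g0 A B _ hAB hBg hgA hcover (m := m + 2) hz2 i2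
        exact z11 g0 A B _ hAB hBg hgA hcover (m := m + 3) hz3 i3
  refine ⟨m + 4, fun v hv => ?_⟩
  rcases hcover v with rfl | rfl | rfl
  · exact hdead.1.mp hv
  · exact hdead.2.1.mp hv
  · exact hdead.2.2.1.mp hv

end Tri6

end RDAF
/-- **Undecidability of RDAF termination (Theorem 5).** The predicate `P(n)` = "flooding on the
triangle graph with source `g0` under the delay function `d_{e,x}` terminates, where `e` is the
code encoded by `(unpair n).1` and `x = (unpair n).2`" is not a computable predicate. -/
theorem RDAF.termination_undecidable
    {V : Type*} (g0 A B : V)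
    (hAB : A ≠ B) (hBg : B ≠ g0) (hgA : g0 ≠ A)
    (hcover : ∀ u : V, u = g0 ∨ u = A ∨ u = B) :
    ¬ ComputablePred (fun n : ℕ =>
      RDAF.Terminates (RDAF.triangle g0 A B) g0
        (RDAF.dEX g0 A B (Denumerable.ofNat Nat.Partrec.Code (Nat.unpair n).1)
          (Nat.unpair n).2)) := by
  intro hC
  have key : ∀ n : ℕ,
      (RDAF.Terminates (RDAF.triangle g0 A B) g0
        (RDAF.dEX g0 A B (Denumerable.ofNat Nat.Partrec.Code (Nat.unpair n).1)
          (Nat.unpair n).2)) ↔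
      (Nat.Partrec.Code.eval (Denumerable.ofNat Nat.Partrec.Code (Nat.unpair n).1)
        (Nat.unpair n).2).Dom := by
    intro n
    constructor
    · intro ht
      by_contra hn
      refine RDAF.not_term_of_no_halt g0 A B hAB hBg hgA hcover _ _ (fun k => ?_) ht
      by_contra hke
      obtain ⟨y, hy⟩ := Option.ne_none_iff_exists'.mp hke
      exact hn (Part.dom_iff_mem.mpr ⟨y, Nat.Partrec.Code.evaln_sound hy⟩)
    · exact RDAF.term_of_halt g0 A B hAB hBg hgA hcover _ _
  have hC2 := hC.of_eq key
  obtain ⟨f, hf, hfp⟩ := ComputablePred.computable_iff.mp hC2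
  have hg : Computable fun c : Nat.Partrec.Code => f (Nat.pair (Encodable.encode c) 0) :=
    hf.comp ((Primrec₂.natPair.comp Primrec.encode (Primrec.const 0)).to_comp)
  have hfinal : ComputablePred fun c : Nat.Partrec.Code => (Nat.Partrec.Code.eval c 0).Dom := by
    refine ComputablePred.computable_iff.mpr
      ⟨fun c => f (Nat.pair (Encodable.encode c) 0), hg, ?_⟩
    funext c
    have h1 := congrFun hfp (Nat.pair (Encodable.encode c) 0)
    simp only [Nat.unpair_pair, Denumerable.ofNat_encode] at h1
    exact h1
  exact ComputablePred.halting_problem 0 hfinal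
end

section
/- Resilient undecidability (Theorem 6): let f : ℕ → ℕ be a computable function with lim_{n→∞} f(n) = ∞ (for every m there exists N such that f(n) ≥ m for all n ≥ N). For a code e : Nat.Partrec.Code and x ∈ ℕ, define the delay function d_{f,e,x} on the triangle by d_{f,e,x}(j,u,ed) = 0 for all u and ed if e halts on x within f(j) steps, and d_{f,e,x}(j,u,ed) = d0(j,u,ed) otherwise. Then: (a) flooding on the triangle with source g0 under d_{f,e,x} terminates if and only if e halts on x; and (b) the predicate P_f on ℕ defined by P_f(n) = 'flooding under d_{f,e,x} terminates, where e = Nat.Partrec.Code.ofNat (Nat.unpair n).1 and x = (Nat.unpair n).2' is not a computable predicate (¬ ComputablePred P_f). -/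
open scoped Classical

namespace RDAF

/-- The delay function `d_{f,e,x}` on the triangle: no delays from the moment the code `cde`
halts on input `x` within `f j` steps; the basic delay function `d0` otherwise. -/
noncomputable def dFEX {V : Type*} (g0 A B : V) (f : ℕ → ℕ) (cde : Nat.Partrec.Code)
    (x : ℕ) : ℕ → V → Sym2 V → Bool := fun j u e =>
  if Nat.Partrec.Code.evaln (f j) cde x ≠ none then false else d0 g0 A B j u e

end RDAF

/-! ### Auxiliary finite-state simulation of the triangle dynamics -/

set_option maxRecDepth 100000

namespace RDAFP

/-- Node state: message bit and destination-set bits. -/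
abbrev NS := Bool × (Fin 3 → Bool)
/-- Global state. -/
abbrev GS := Fin 3 → NS

def v3 {α : Type*} (a b c : α) : Fin 3 → α := fun u =>
  if u = 0 then a else if u = 1 then b else c

def mkNS (m d0 d1 d2 : Bool) : NS := (m, v3 d0 d1 d2)

def bex3 (f : Fin 3 → Bool) : Bool := f 0 || f 1 || f 2

lemma bex3_iff (f : Fin 3 → Bool) : bex3 f = true ↔ ∃ v, f v = true := by
  constructor
  · intro h
    rcases Bool.or_eq_true_iff.1 h with h | h
    · rcases Bool.or_eq_true_iff.1 h with h | h
      exacts [⟨0, h⟩, ⟨1, h⟩]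
    · exact ⟨2, h⟩
  · rintro ⟨v, hv⟩
    fin_cases v <;> simp_all [bex3]

lemma bex3_false {f : Fin 3 → Bool} (h : bex3 f = false) : ∀ v, f v = false := by
  intro v
  simp only [bex3, Bool.or_eq_false_iff] at h
  fin_cases v <;> tauto

/-- Concrete one-round evolution. -/
def cstep (δ : Fin 3 → Fin 3 → Bool) (g : GS) : GS := fun u =>
  let recv : Fin 3 → Bool := fun v => (!(v == u)) && (g v).1 && (g v).2 u && !(δ v u)
  let sne : Bool := bex3 recv
  ( sne || ((g u).1 && bex3 (fun v => (g u).2 v && δ u v)),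
    fun v => if sne = true then (!(v == u)) && !(recv v)
      else (g u).1 && (g u).2 v && δ u v )

def czero : Fin 3 → Fin 3 → Bool := fun _ _ => false

def cinit : GS :=
  v3 (mkNS true false true true) (mkNS false false false false) (mkNS false false false false)

def cd0f (r : Fin 3) : Fin 3 → Fin 3 → Bool := fun v u =>
  if r = 0 then !(decide ((v = 0 ∧ u = 2) ∨ (v = 2 ∧ u = 0)))
  else if r = 1 then !(decide ((v = 0 ∧ u = 1) ∨ (v = 1 ∧ u = 0)))
  else !(decide ((v = 1 ∧ u = 2) ∨ (v = 2 ∧ u = 1)))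

def ctraj (δ : ℕ → Fin 3 → Fin 3 → Bool) : ℕ → GS
  | 0 => cinit
  | j + 1 => cstep (δ (j + 1)) (ctraj δ j)

def phase (k : ℕ) : Fin 3 := ⟨k % 3, Nat.mod_lt _ (by norm_num)⟩

lemma phase_succ (k : ℕ) : phase (k + 1) = phase k + 1 := by
  apply Fin.ext
  simp only [phase, Fin.add_def, Fin.val_one]
  omega

/-! ### Boolean equality tests -/

def eqNS (a b : NS) : Bool :=
  (a.1 == b.1) && (a.2 0 == b.2 0) && (a.2 1 == b.2 1) && (a.2 2 == b.2 2)

def eqGS (g h : GS) : Bool := eqNS (g 0) (h 0) && eqNS (g 1) (h 1) && eqNS (g 2) (h 2)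

def memB (g : GS) (ph : Fin 3) (L : List (GS × Fin 3)) : Bool :=
  L.any fun p => eqGS p.1 g && (p.2 == ph)

lemma eqNS_sound {a b : NS} (h : eqNS a b = true) : a = b := by
  simp only [eqNS, Bool.and_eq_true, beq_iff_eq] at h
  obtain ⟨⟨⟨h1, h2⟩, h3⟩, h4⟩ := h
  refine Prod.ext h1 (funext fun v => ?_)
  fin_cases v <;> assumption

lemma eqGS_sound {g h : GS} (e : eqGS g h = true) : g = h := by
  simp only [eqGS, Bool.and_eq_true] at e
  obtain ⟨⟨e1, e2⟩, e3⟩ := e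
  funext u
  fin_cases u
  exacts [eqNS_sound e1, eqNS_sound e2, eqNS_sound e3]

lemma memB_spec {g : GS} {ph : Fin 3} {L : List (GS × Fin 3)} (h : memB g ph L = true) :
    ∃ p ∈ L, p.1 = g ∧ p.2 = ph := by
  simp only [memB, List.any_eq_true, Bool.and_eq_true, beq_iff_eq] at h
  obtain ⟨p, hp, h1, h2⟩ := h
  exact ⟨p, hp, eqGS_sound h1, h2⟩

/-! ### The two certified state tables -/

def L0 : List (GS × Fin 3) := [
  (v3 (mkNS true false true true) (mkNS false false false false) (mkNS false false false false), 1),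
  (v3 (mkNS true false false true) (mkNS true false false true) (mkNS false false false false), 2),
  (v3 (mkNS true false false true) (mkNS false false false false) (mkNS true true false false), 0),
  (v3 (mkNS true false true false) (mkNS false false false false) (mkNS true false true false), 1),
  (v3 (mkNS false false false false) (mkNS true false false true) (mkNS true false true false), 2),
  (v3 (mkNS false false false false) (mkNS true true false false) (mkNS true true false false), 0),
  (v3 (mkNS true false true false) (mkNS true true false false) (mkNS false false false false), 1),
  (v3 (mkNS true false false true) (mkNS true false false true) (mkNS false false false false), 2)]

def L13 : List (GS × Fin 3) := [
  (v3 (mkNS false false false false) (mkNS false false false false) (mkNS false false false false), 0),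
  (v3 (mkNS false false false false) (mkNS false false false false) (mkNS false false false false), 1),
  (v3 (mkNS false false false false) (mkNS false false false false) (mkNS false false false false), 2),
  (v3 (mkNS false false false false) (mkNS false false false false) (mkNS true false false false), 0),
  (v3 (mkNS false false false false) (mkNS true false false false) (mkNS false false false false), 2),
  (v3 (mkNS false false false false) (mkNS true false false true) (mkNS true false true false), 2),
  (v3 (mkNS false false false false) (mkNS true true false false) (mkNS true true false false), 0),
  (v3 (mkNS true false false false) (mkNS false false false false) (mkNS false false false false), 1),
  (v3 (mkNS true false false true) (mkNS false false false false) (mkNS true true false false), 0),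
  (v3 (mkNS true false false true) (mkNS true false false true) (mkNS false false false false), 2),
  (v3 (mkNS true false true false) (mkNS false false false false) (mkNS true false true false), 1),
  (v3 (mkNS true false true false) (mkNS true true false false) (mkNS false false false false), 1),
  (v3 (mkNS true false true true) (mkNS false false false false) (mkNS false false false false), 1)]

lemma L0_init : memB cinit (phase 1) L0 = true := by decide

lemma L0_closed : L0.all (fun p => memB (cstep (cd0f p.2) p.1) (p.2 + 1) L0) = true := by decide

lemma L0_msg : L0.all (fun p => bex3 (fun u => (p.1 u).1)) = true := by decide

lemma L13_init : memB cinit (phase 1) L13 = true := by decide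

lemma L13_closed : L13.all (fun p =>
    memB (cstep czero p.1) (p.2 + 1) L13 && memB (cstep (cd0f p.2) p.1) (p.2 + 1) L13) = true := by
  decide

lemma L13_kill : L13.all (fun p => !(bex3 (fun u => (((cstep czero)^[6]) p.1 u).1))) = true := by
  decide

/-! ### Invariants along trajectories -/

lemma L0_inv (δ : ℕ → Fin 3 → Fin 3 → Bool) (hδ : ∀ k, δ k = cd0f (phase k)) (j : ℕ) :
    memB (ctraj δ j) (phase (j + 1)) L0 = true := by
  induction j with
  | zero => exact L0_init
  | succ j IH =>
    obtain ⟨p, hpL, hp1, hp2⟩ := memB_spec IH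
    have hc := List.all_eq_true.1 L0_closed p hpL
    show memB (cstep (δ (j + 1)) (ctraj δ j)) (phase (j + 1 + 1)) L0 = true
    rw [hδ (j + 1), ← hp1, ← hp2, phase_succ (j + 1), ← hp2]
    exact hc

lemma L13_inv (δ : ℕ → Fin 3 → Fin 3 → Bool)
    (hδ : ∀ k, δ k = czero ∨ δ k = cd0f (phase k)) (j : ℕ) :
    memB (ctraj δ j) (phase (j + 1)) L13 = true := by
  induction j with
  | zero => exact L13_init
  | succ j IH =>
    obtain ⟨p, hpL, hp1, hp2⟩ := memB_spec IH
    have hc := List.all_eq_true.1 L13_closed p hpL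
    rw [Bool.and_eq_true] at hc
    show memB (cstep (δ (j + 1)) (ctraj δ j)) (phase (j + 1 + 1)) L13 = true
    rw [← hp1, phase_succ (j + 1), ← hp2]
    rcases hδ (j + 1) with h | h <;> rw [h]
    · exact hc.1
    · rw [← hp2]; exact hc.2

lemma L0_msg_of_mem {g : GS} {ph : Fin 3} (h : memB g ph L0 = true) :
    ∃ u, (g u).1 = true := by
  obtain ⟨p, hpL, hp1, -⟩ := memB_spec h
  have := List.all_eq_true.1 L0_msg p hpL
  rw [hp1] at this
  exact (bex3_iff _).1 this

lemma L13_kill_of_mem {g : GS} {ph : Fin 3} (h : memB g ph L13 = true) :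
    ∀ u, (((cstep czero)^[6]) g u).1 = false := by
  obtain ⟨p, hpL, hp1, -⟩ := memB_spec h
  have := List.all_eq_true.1 L13_kill p hpL
  rw [hp1, Bool.not_eq_true'] at this
  exact bex3_false this

lemma ctraj_zero_tail (δ : ℕ → Fin 3 → Fin 3 → Bool) (N : ℕ)
    (h : ∀ m, N < m → δ m = czero) (i : ℕ) :
    ctraj δ (N + i) = (cstep czero)^[i] (ctraj δ N) := by
  induction i with
  | zero => rfl
  | succ i IH =>
    show cstep (δ (N + i + 1)) (ctraj δ (N + i)) = _
    rw [h (N + i + 1) (by omega), IH]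
    exact (Function.iterate_succ_apply' _ _ _).symm

end RDAFP

/-! ### Correspondence with the abstract protocol on the triangle -/

namespace RDAFP

variable {V : Type*}

def cvert (g0 A B : V) : Fin 3 → V := v3 g0 A B

def cdel (g0 A B : V) (d : ℕ → V → Sym2 V → Bool) : ℕ → Fin 3 → Fin 3 → Bool :=
  fun k v u => d k (cvert g0 A B v) s(cvert g0 A B v, cvert g0 A B u)

section Triangle

variable (g0 A B : V) (hAB : A ≠ B) (hBg : B ≠ g0) (hgA : g0 ≠ A)
  (hcover : ∀ u : V, u = g0 ∨ u = A ∨ u = B)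

include hAB hBg hgA in
lemma cvert_inj : Function.Injective (cvert g0 A B) := by
  intro a b h
  fin_cases a <;> fin_cases b <;> simp_all [cvert, v3]

include hcover in
lemma cvert_surj : ∀ w : V, ∃ u : Fin 3, cvert g0 A B u = w := by
  intro w
  rcases hcover w with rfl | rfl | rfl
  exacts [⟨0, rfl⟩, ⟨1, rfl⟩, ⟨2, rfl⟩]

include hAB hBg hgA hcover in
lemma triangle_adj (x y : V) : (RDAF.triangle g0 A B).Adj x y ↔ x ≠ y := by
  rw [RDAF.triangle, SimpleGraph.fromEdgeSet_adj]
  constructor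
  · rintro ⟨-, h⟩; exact h
  · intro h
    refine ⟨?_, h⟩
    have h1 : s(A, g0) = s(g0, A) := Sym2.eq_swap
    have h2 : s(B, A) = s(A, B) := Sym2.eq_swap
    have h3 : s(g0, B) = s(B, g0) := Sym2.eq_swap
    rcases hcover x with rfl | rfl | rfl <;> rcases hcover y with rfl | rfl | rfl <;>
      simp_all [Set.mem_insert_iff, Set.mem_singleton_iff]

end Triangle

end RDAFP
namespace RDAFP

/-! ### Prop-level characterisation of `cstep` -/

def recvP (δ : Fin 3 → Fin 3 → Bool) (g : GS) (u v : Fin 3) : Prop :=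
  v ≠ u ∧ (g v).1 = true ∧ (g v).2 u = true ∧ δ v u = false

lemma recvP_iff (δ : Fin 3 → Fin 3 → Bool) (g : GS) (u v : Fin 3) :
    ((!(v == u)) && (g v).1 && (g v).2 u && !(δ v u)) = true ↔ recvP δ g u v := by
  simp only [recvP, Bool.and_eq_true, Bool.not_eq_true', beq_eq_false_iff_ne, and_assoc]

lemma bex3_recv (δ : Fin 3 → Fin 3 → Bool) (g : GS) (u : Fin 3) :
    bex3 (fun v => (!(v == u)) && (g v).1 && (g v).2 u && !(δ v u)) = true ↔
      ∃ v, recvP δ g u v := by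
  rw [bex3_iff]
  exact exists_congr fun v => recvP_iff δ g u v

lemma cstep_fst (δ : Fin 3 → Fin 3 → Bool) (g : GS) (u : Fin 3) :
    (cstep δ g u).1 = true ↔
      (∃ v, recvP δ g u v) ∨ ((g u).1 = true ∧ ∃ v, (g u).2 v = true ∧ δ u v = true) := by
  show (bex3 (fun v => (!(v == u)) && (g v).1 && (g v).2 u && !(δ v u)) ||
    ((g u).1 && bex3 (fun v => (g u).2 v && δ u v))) = true ↔ _
  rw [Bool.or_eq_true, Bool.and_eq_true, bex3_recv, bex3_iff]
  simp only [Bool.and_eq_true]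

lemma cstep_snd (δ : Fin 3 → Fin 3 → Bool) (g : GS) (u v : Fin 3) :
    (cstep δ g u).2 v = true ↔
      ((∃ w, recvP δ g u w) ∧ v ≠ u ∧ ¬ recvP δ g u v) ∨
      (¬(∃ w, recvP δ g u w) ∧ (g u).1 = true ∧ (g u).2 v = true ∧ δ u v = true) := by
  have hv : ((!(v == u)) && (g v).1 && (g v).2 u && !(δ v u)) = false ↔
      ¬ recvP δ g u v := by
    rw [← recvP_iff δ g u v]
    simp
  show (if bex3 (fun w => (!(w == u)) && (g w).1 && (g w).2 u && !(δ w u)) = true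
      then (!(v == u)) && !((!(v == u)) && (g v).1 && (g v).2 u && !(δ v u))
      else (g u).1 && (g u).2 v && δ u v) = true ↔ _
  by_cases h : ∃ w, recvP δ g u w
  · rw [if_pos ((bex3_recv δ g u).2 h)]
    simp only [Bool.and_eq_true, Bool.not_eq_true', beq_eq_false_iff_ne]
    constructor
    · rintro ⟨h1, h2⟩
      exact Or.inl ⟨h, h1, hv.1 h2⟩
    · rintro (⟨-, h1, h2⟩ | ⟨hc, -⟩)
      exacts [⟨h1, hv.2 h2⟩, absurd h hc]
  · rw [if_neg (fun hc => h ((bex3_recv δ g u).1 hc))]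
    simp only [Bool.and_eq_true]
    constructor
    · rintro ⟨⟨h1, h2⟩, h3⟩
      exact Or.inr ⟨h, h1, h2, h3⟩
    · rintro (⟨hc, -⟩ | ⟨-, h1, h2, h3⟩)
      exacts [absurd hc h, ⟨⟨h1, h2⟩, h3⟩]

variable {V : Type*}

section Corr

variable (g0 A B : V) (hAB : A ≠ B) (hBg : B ≠ g0) (hgA : g0 ≠ A)
  (hcover : ∀ u : V, u = g0 ∨ u = A ∨ u = B)

include hAB hBg hgA hcover in
theorem corr (d : ℕ → V → Sym2 V → Bool) (j : ℕ) :
    ∀ u : Fin 3,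
      ((ctraj (cdel g0 A B d) j u).1 = true ↔
        (RDAF.stateAt (RDAF.triangle g0 A B) g0 d j (cvert g0 A B u)).hasMsg) ∧
      ∀ v : Fin 3, ((ctraj (cdel g0 A B d) j u).2 v = true ↔
        cvert g0 A B v ∈ (RDAF.stateAt (RDAF.triangle g0 A B) g0 d j (cvert g0 A B u)).dst) := by
  have hinj := cvert_inj g0 A B hAB hBg hgA
  have hsurj := cvert_surj g0 A B hcover
  have hadj := triangle_adj g0 A B hAB hBg hgA hcover
  have hAg : A ≠ g0 := hgA.symm
  have hBA : B ≠ A := hAB.symm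
  have hgB : g0 ≠ B := hBg.symm
  induction j with
  | zero =>
    intro u
    constructor
    · show (cinit u).1 = true ↔ (RDAF.init (RDAF.triangle g0 A B) g0 (cvert g0 A B u)).hasMsg
      fin_cases u <;>
        simp [cinit, mkNS, v3, RDAF.init, cvert, hAg, hBg]
    · intro v
      show (cinit u).2 v = true ↔
        cvert g0 A B v ∈ (RDAF.init (RDAF.triangle g0 A B) g0 (cvert g0 A B u)).dst
      fin_cases u <;> fin_cases v <;>
        simp [cinit, mkNS, v3, RDAF.init, cvert, hAg, hBg, hAB, hgA, hBA, hgB,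
          SimpleGraph.mem_neighborSet, hadj]
  | succ j IH =>
    intro u
    set C := cvert g0 A B with hC
    set δ := cdel g0 A B d with hδdef
    set st := RDAF.stateAt (RDAF.triangle g0 A B) g0 d j with hstdef
    set g := ctraj δ j with hgdef
    set S' : Set V :=
      {v | (RDAF.triangle g0 A B).Adj v (C u) ∧ (st v).hasMsg ∧ C u ∈ (st v).dst ∧
        d (j + 1) v s(v, C u) = false} with hS'
    have hmem : ∀ v : Fin 3, C v ∈ S' ↔ recvP (δ (j + 1)) g u v := by
      intro v
      have e2 := (IH v).1
      have e3 := (IH v).2 u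
      have e4 : d (j + 1) (C v) s(C v, C u) = δ (j + 1) v u := rfl
      simp only [hS', Set.mem_setOf_eq, recvP, hadj, hinj.ne_iff, e4, ← e2, ← e3]
    have hSneP : S'.Nonempty ↔ ∃ v, recvP (δ (j + 1)) g u v := by
      constructor
      · rintro ⟨w, hw⟩
        obtain ⟨v, rfl⟩ := hsurj w
        exact ⟨v, (hmem v).1 hw⟩
      · rintro ⟨v, hv⟩
        exact ⟨C v, (hmem v).2 hv⟩
    have hu1 : ∀ w : Fin 3, ctraj δ (j + 1) w = cstep (δ (j + 1)) g w := fun _ => rfl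
    have hu2 : RDAF.stateAt (RDAF.triangle g0 A B) g0 d (j + 1) (C u) =
        RDAF.step (RDAF.triangle g0 A B) d j st (C u) := rfl
    constructor
    · -- hasMsg component
      rw [hu1 u, cstep_fst, hu2]
      simp only [RDAF.step]
      rw [← hS']
      by_cases hS : S'.Nonempty
      · simp [hS, hSneP.1 hS]
      · have hnr : ¬ ∃ v, recvP (δ (j + 1)) g u v := fun hc => hS (hSneP.2 hc)
        rw [if_neg hS]
        simp only [hnr, false_or]
        by_cases hm : (st (C u)).hasMsg
        · rw [if_pos hm]
          constructor
          · rintro ⟨hg1, v, hv1, hv2⟩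
            exact Or.inr ⟨C v, ((IH u).2 v).1 hv1, hv2⟩
          · rintro (hc | ⟨w, hw1, hw2⟩)
            · exact absurd hc hS
            · obtain ⟨v, rfl⟩ := hsurj w
              exact ⟨(IH u).1.2 hm, v, ((IH u).2 v).2 hw1, hw2⟩
        · rw [if_neg hm]
          have hg1 : ¬(g u).1 = true := fun hc => hm ((IH u).1.1 hc)
          simp [hg1, hS]
    · -- dst component
      intro v
      rw [hu1 u, cstep_snd, hu2]
      simp only [RDAF.step]
      rw [← hS']
      by_cases hS : S'.Nonempty
      · have hex := hSneP.1 hS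
        rw [if_pos hS]
        constructor
        · rintro (⟨-, h1, h2⟩ | ⟨hc, -⟩)
          · refine ⟨?_, fun hmem' => h2 ((hmem v).1 hmem')⟩
            exact (hadj _ _).2 (Ne.symm (hinj.ne h1))
          · exact absurd hex hc
        · rintro ⟨h1, h2⟩
          refine Or.inl ⟨hex, ?_, fun hr => h2 ((hmem v).2 hr)⟩
          intro he
          exact (hadj (C u) (C v)).1 h1 (by rw [he])
      · have hnr : ¬ ∃ w, recvP (δ (j + 1)) g u w := fun hc => hS (hSneP.2 hc)
        rw [if_neg hS]
        by_cases hm : (st (C u)).hasMsg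
        · rw [if_pos hm]
          constructor
          · rintro (⟨hc, -⟩ | ⟨-, hg1, hD, hd⟩)
            · exact absurd hc hnr
            · exact ⟨((IH u).2 v).1 hD, hd⟩
          · rintro ⟨hD, hd⟩
            exact Or.inr ⟨hnr, (IH u).1.2 hm, ((IH u).2 v).2 hD, hd⟩
        · rw [if_neg hm]
          have hg1 : ¬(g u).1 = true := fun hc => hm ((IH u).1.1 hc)
          simp [hnr, hg1]

include hAB hBg hgA in
lemma cdel_d0 (k : ℕ) : cdel g0 A B (RDAF.d0 g0 A B) k = cd0f (phase k) := by
  have hAg : A ≠ g0 := hgA.symm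
  have hBA : B ≠ A := hAB.symm
  have hgB : g0 ≠ B := hBg.symm
  have h3 : k % 3 = 0 ∨ k % 3 = 1 ∨ k % 3 = 2 := by omega
  funext v u
  show RDAF.d0 g0 A B k (cvert g0 A B v) s(cvert g0 A B v, cvert g0 A B u) = _
  rcases h3 with h | h | h
  · have hph : phase k = 0 := by apply Fin.ext; simp [phase, h]
    rw [hph]
    fin_cases v <;> fin_cases u <;>
      simp [RDAF.d0, cd0f, cvert, v3, Sym2.eq_iff, h, hAB, hBg, hgA, hAg, hBA, hgB]
  · have hph : phase k = 1 := by apply Fin.ext; simp [phase, h]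
    rw [hph]
    fin_cases v <;> fin_cases u <;>
      simp [RDAF.d0, cd0f, cvert, v3, Sym2.eq_iff, h, hAB, hBg, hgA, hAg, hBA, hgB]
  · have hph : phase k = 2 := by apply Fin.ext; simp [phase, h]
    rw [hph]
    fin_cases v <;> fin_cases u <;>
      simp [RDAF.d0, cd0f, cvert, v3, Sym2.eq_iff, h, hAB, hBg, hgA, hAg, hBA, hgB]

include hAB hBg hgA in
lemma cdel_dFEX (f : ℕ → ℕ) (cde : Nat.Partrec.Code) (x : ℕ) (k : ℕ) :
    cdel g0 A B (RDAF.dFEX g0 A B f cde x) k =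
      if Nat.Partrec.Code.evaln (f k) cde x ≠ none then czero else cd0f (phase k) := by
  by_cases h : Nat.Partrec.Code.evaln (f k) cde x ≠ none
  · rw [if_pos h]
    funext v u
    simp [cdel, RDAF.dFEX, h, czero]
  · rw [if_neg h, ← cdel_d0 g0 A B hAB hBg hgA k]
    funext v u
    simp [cdel, RDAF.dFEX, h]

include hAB hBg hgA hcover in
theorem partA (f : ℕ → ℕ) (hlim : ∀ m : ℕ, ∃ N : ℕ, ∀ n : ℕ, N ≤ n → m ≤ f n)
    (cde : Nat.Partrec.Code) (x : ℕ) :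
    RDAF.Terminates (RDAF.triangle g0 A B) g0 (RDAF.dFEX g0 A B f cde x) ↔
      (Nat.Partrec.Code.eval cde x).Dom := by
  have hsurj := cvert_surj g0 A B hcover
  have hcorr := corr g0 A B hAB hBg hgA hcover (RDAF.dFEX g0 A B f cde x)
  constructor
  · intro hterm
    by_contra hdom
    have hnone : ∀ k, Nat.Partrec.Code.evaln k cde x = none := by
      intro k
      cases hk : Nat.Partrec.Code.evaln k cde x with
      | none => rfl
      | some y =>
        exact absurd (Part.dom_iff_mem.2 ⟨y, Nat.Partrec.Code.evaln_sound hk⟩) hdom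
    have hδ : ∀ k, cdel g0 A B (RDAF.dFEX g0 A B f cde x) k = cd0f (phase k) := by
      intro k
      rw [cdel_dFEX g0 A B hAB hBg hgA f cde x k, if_neg (by simp [hnone (f k)])]
    obtain ⟨t, ht⟩ := hterm
    have hinv := L0_inv (cdel g0 A B (RDAF.dFEX g0 A B f cde x)) hδ t
    obtain ⟨u, hu⟩ := L0_msg_of_mem hinv
    exact ht (cvert g0 A B u) (((hcorr t u).1).1 hu)
  · intro hdom
    obtain ⟨y, hy⟩ := Part.dom_iff_mem.1 hdom
    obtain ⟨k, hk⟩ := Nat.Partrec.Code.evaln_complete.1 hy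
    obtain ⟨N, hN⟩ := hlim k
    have hδcases : ∀ m, cdel g0 A B (RDAF.dFEX g0 A B f cde x) m = czero ∨
        cdel g0 A B (RDAF.dFEX g0 A B f cde x) m = cd0f (phase m) := by
      intro m
      rw [cdel_dFEX g0 A B hAB hBg hgA f cde x m]
      split
      · exact Or.inl rfl
      · exact Or.inr rfl
    have hztail : ∀ m, N < m → cdel g0 A B (RDAF.dFEX g0 A B f cde x) m = czero := by
      intro m hm
      rw [cdel_dFEX g0 A B hAB hBg hgA f cde x m, if_pos]
      have hkm : k ≤ f m := hN m hm.le
      have hmono := Nat.Partrec.Code.evaln_mono hkm hk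
      intro hcon
      rw [hcon] at hmono
      exact Option.not_mem_none y hmono
    refine ⟨N + 6, fun w => ?_⟩
    obtain ⟨u, rfl⟩ := hsurj w
    intro hmsg
    have h1 : (ctraj (cdel g0 A B (RDAF.dFEX g0 A B f cde x)) (N + 6) u).1 = true :=
      ((hcorr (N + 6) u).1).2 hmsg
    have h2 := L13_inv (cdel g0 A B (RDAF.dFEX g0 A B f cde x)) hδcases N
    have h3 := L13_kill_of_mem h2 u
    rw [ctraj_zero_tail _ N hztail 6, h3] at h1
    exact Bool.false_ne_true h1

end Corr

end RDAFP
/-- **Resilient undecidability (Theorem 6).** Let `f` be a computable function tending to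
infinity. Then (a) flooding on the triangle under `d_{f,e,x}` terminates iff the code `e` halts
on `x`; and (b) the resulting termination predicate is not computable. -/
theorem RDAF.resilient_undecidability
    {V : Type*} (g0 A B : V)
    (hAB : A ≠ B) (hBg : B ≠ g0) (hgA : g0 ≠ A)
    (hcover : ∀ u : V, u = g0 ∨ u = A ∨ u = B)
    (f : ℕ → ℕ) (hf : Computable f)
    (hlim : ∀ m : ℕ, ∃ N : ℕ, ∀ n : ℕ, N ≤ n → m ≤ f n) :
    (∀ (cde : Nat.Partrec.Code) (x : ℕ),
      RDAF.Terminates (RDAF.triangle g0 A B) g0 (RDAF.dFEX g0 A B f cde x) ↔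
        (Nat.Partrec.Code.eval cde x).Dom) ∧
    ¬ ComputablePred (fun n : ℕ =>
      RDAF.Terminates (RDAF.triangle g0 A B) g0
        (RDAF.dFEX g0 A B f (Denumerable.ofNat Nat.Partrec.Code (Nat.unpair n).1)
          (Nat.unpair n).2)) := by
  have hA : ∀ (cde : Nat.Partrec.Code) (x : ℕ),
      RDAF.Terminates (RDAF.triangle g0 A B) g0 (RDAF.dFEX g0 A B f cde x) ↔
        (Nat.Partrec.Code.eval cde x).Dom :=
    fun cde x => RDAFP.partA g0 A B hAB hBg hgA hcover f hlim cde x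
  refine ⟨hA, ?_⟩
  intro hC
  apply ComputablePred.halting_problem 0
  rw [ComputablePred.computable_iff] at hC ⊢
  obtain ⟨p, hp, hPe⟩ := hC
  refine ⟨fun c => p (Nat.pair (Encodable.encode c) 0),
    hp.comp ((Primrec₂.natPair.comp Primrec.encode (Primrec.const 0)).to_comp), ?_⟩
  funext c
  have h2 : RDAF.Terminates (RDAF.triangle g0 A B) g0
      (RDAF.dFEX g0 A B f
        (Denumerable.ofNat Nat.Partrec.Code
          (Nat.unpair (Nat.pair (Encodable.encode c) 0)).1)
        (Nat.unpair (Nat.pair (Encodable.encode c) 0)).2) ↔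
      (Nat.Partrec.Code.eval c 0).Dom := by
    simpa [Nat.unpair_pair, Denumerable.ofNat_encode] using hA c 0
  have h3 := iff_of_eq (congrFun hPe (Nat.pair (Encodable.encode c) 0))
  exact propext (h2.symm.trans h3)
end

section
/- EPA decidability via bounded-round characterisation (Theorem 7): suppose the delay function d is eventually periodic with stabilisation round c and cycle length l ≥ 1, i.e. d(i,v,e) = d(i+l,v,e) for every i ≥ c, every v ∈ V and every edge e incident to v. Let N = (2^{2|V|} + 1)^{|V|}. Then flooding under d terminates (there exists a round t with M(t,v) = 0 for every v ∈ V) if and only if flooding has terminated by round c + l·N (i.e. M(c + l·N, v) = 0 for every v ∈ V). In particular, termination under an eventually periodic adversary is determined by the first c + l·N rounds and is therefore decidable. -/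
open scoped Classical

namespace RDAF

variable {V : Type*}

lemma dst_subset (G : SimpleGraph V) (g0 : V) (d : ℕ → V → Sym2 V → Bool) :
    ∀ j u, (stateAt G g0 d j u).dst ⊆ G.neighborSet u := by
  intro j
  induction j with
  | zero =>
    intro u v hv
    simp only [stateAt, init] at hv
    split_ifs at hv with h
    · subst h; exact hv
    · exact absurd hv (by simp)
  | succ j ih =>
    intro u v hv
    simp only [stateAt, step] at hv
    split_ifs at hv with h1 h2
    · exact hv.1
    · exact ih u hv.1
    · exact absurd hv (by simp)

lemma empty_of_not_hasMsg (G : SimpleGraph V) (g0 : V) (d : ℕ → V → Sym2 V → Bool) :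
    ∀ j u, ¬ (stateAt G g0 d j u).hasMsg →
      (stateAt G g0 d j u).src = ∅ ∧ (stateAt G g0 d j u).dst = ∅ := by
  intro j u h
  cases j with
  | zero =>
    simp only [stateAt, init] at *
    split_ifs at * with hg
    · exact absurd trivial h
    · exact ⟨rfl, rfl⟩
  | succ j =>
    simp only [stateAt, step] at *
    push_neg at h
    exact ⟨h.1, h.2⟩

end RDAF
namespace RDAF

lemma terminatedBy_succ (G : SimpleGraph V) (g0 : V) (d : ℕ → V → Sym2 V → Bool) (t : ℕ)
    (h : TerminatedBy G g0 d t) : TerminatedBy G g0 d (t + 1) := by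
  intro u hu
  simp only [M, stateAt, step] at hu
  have hs : {v | G.Adj v u ∧ (stateAt G g0 d t v).hasMsg ∧ u ∈ (stateAt G g0 d t v).dst ∧
      d (t + 1) v s(v, u) = false} = (∅ : Set V) := by
    ext v; simp only [Set.mem_setOf_eq, Set.mem_empty_iff_false, iff_false]
    rintro ⟨-, hm, -, -⟩; exact h v hm
  rw [hs] at hu
  rcases hu with hu | hu
  · exact absurd hu (by simp)
  · rw [if_neg (by simp), if_neg (show ¬(stateAt G g0 d t u).hasMsg from h u)] at hu
    exact absurd hu (by simp)

lemma terminatedBy_mono (G : SimpleGraph V) (g0 : V) (d : ℕ → V → Sym2 V → Bool) {t t' : ℕ}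
    (htt : t ≤ t') (h : TerminatedBy G g0 d t) : TerminatedBy G g0 d t' := by
  induction t' with
  | zero => exact (Nat.le_zero.1 htt) ▸ h
  | succ n ih =>
    rcases Nat.lt_or_ge t (n + 1) with hlt | hge
    · exact terminatedBy_succ G g0 d n (ih (Nat.lt_succ_iff.1 hlt))
    · exact (Nat.le_antisymm htt hge) ▸ h

lemma step_eq_of_d_eq (G : SimpleGraph V) (d : ℕ → V → Sym2 V → Bool) (j j' : ℕ)
    (st : V → RDAFState V) (hst : ∀ u, (st u).dst ⊆ G.neighborSet u)
    (hd : ∀ v w : V, G.Adj v w → d (j + 1) v s(v, w) = d (j' + 1) v s(v, w)) :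
    step G d j st = step G d j' st := by
  funext u
  have hs : {v | G.Adj v u ∧ (st v).hasMsg ∧ u ∈ (st v).dst ∧ d (j + 1) v s(v, u) = false}
      = {v | G.Adj v u ∧ (st v).hasMsg ∧ u ∈ (st v).dst ∧ d (j' + 1) v s(v, u) = false} := by
    ext v
    constructor <;> rintro ⟨h1, h2, h3, h4⟩
    · exact ⟨h1, h2, h3, (hd v u h1) ▸ h4⟩
    · exact ⟨h1, h2, h3, (hd v u h1).symm ▸ h4⟩
  have ht : {v | v ∈ (st u).dst ∧ d (j + 1) u s(u, v) = true}
      = {v | v ∈ (st u).dst ∧ d (j' + 1) u s(u, v) = true} := by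
    ext v
    constructor <;> rintro ⟨h1, h2⟩
    · exact ⟨h1, (hd u v (hst u h1)) ▸ h2⟩
    · exact ⟨h1, (hd u v (hst u h1)).symm ▸ h2⟩
  simp only [step]
  rw [hs, ht]

lemma d_period (G : SimpleGraph V) (d : ℕ → V → Sym2 V → Bool) (c l : ℕ)
    (hper : ∀ i : ℕ, c ≤ i → ∀ u : V, ∀ e ∈ G.edgeSet, u ∈ e → d i u e = d (i + l) u e)
    (q i : ℕ) (hi : c ≤ i) (v : V) (e : Sym2 V) (he : e ∈ G.edgeSet) (hv : v ∈ e) :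
    d i v e = d (i + q * l) v e := by
  induction q with
  | zero => simp
  | succ q ih =>
    rw [ih, hper (i + q * l) (le_trans hi (Nat.le_add_right _ _)) v e he hv]
    ring_nf

lemma stateAt_shift (G : SimpleGraph V) (g0 : V) (d : ℕ → V → Sym2 V → Bool) (c l : ℕ)
    (hper : ∀ i : ℕ, c ≤ i → ∀ u : V, ∀ e ∈ G.edgeSet, u ∈ e → d i u e = d (i + l) u e)
    (q m : ℕ) (hm : c ≤ m)
    (h0 : stateAt G g0 d m = stateAt G g0 d (m + q * l)) :
    ∀ k, stateAt G g0 d (m + k) = stateAt G g0 d (m + q * l + k) := by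
  intro k
  induction k with
  | zero => simpa using h0
  | succ k ih =>
    have e1 : m + (k + 1) = (m + k) + 1 := rfl
    have e2 : m + q * l + (k + 1) = (m + q * l + k) + 1 := rfl
    rw [e1, e2]
    show step G d (m + k) (stateAt G g0 d (m + k))
        = step G d (m + q * l + k) (stateAt G g0 d (m + q * l + k))
    rw [← ih]
    refine step_eq_of_d_eq G d (m + k) (m + q * l + k) _ (fun u => dst_subset G g0 d (m + k) u)
      (fun v w hvw => ?_)
    have := d_period G d c l hper q (m + k + 1) (by omega) v s(v, w)
      (G.mem_edgeSet.mpr hvw) (Sym2.mem_mk_left v w)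
    rw [this]; ring_nf

end RDAF
namespace RDAF

lemma state_ext {x y : RDAFState V} (h1 : x.hasMsg ↔ y.hasMsg)
    (h2 : x.src = y.src) (h3 : x.dst = y.dst) : x = y := by
  cases x; cases y
  simp only at h1 h2 h3
  subst h2; subst h3
  rw [propext h1]

noncomputable def encode (x : RDAFState V) : Option (Set V × Set V) :=
  if x.hasMsg then some (x.src, x.dst) else none

lemma stateAt_eq_of_encode_eq (G : SimpleGraph V) (g0 : V) (d : ℕ → V → Sym2 V → Bool)
    (a b : ℕ)
    (h : ∀ u, encode (stateAt G g0 d a u) = encode (stateAt G g0 d b u)) :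
    stateAt G g0 d a = stateAt G g0 d b := by
  funext u
  have hu := h u
  unfold encode at hu
  split_ifs at hu with h1 h2 h2
  · rw [Option.some_inj, Prod.mk.injEq] at hu
    exact state_ext (iff_of_true h1 h2) hu.1 hu.2
  · obtain ⟨hs1, hd1⟩ := empty_of_not_hasMsg G g0 d a u h1
    obtain ⟨hs2, hd2⟩ := empty_of_not_hasMsg G g0 d b u h2
    exact state_ext (iff_of_false h1 h2) (hs1.trans hs2.symm) (hd1.trans hd2.symm)

lemma terminatedBy_of_stateAt_eq (G : SimpleGraph V) (g0 : V) (d : ℕ → V → Sym2 V → Bool)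
    {a b : ℕ} (h : stateAt G g0 d a = stateAt G g0 d b)
    (ht : TerminatedBy G g0 d b) : TerminatedBy G g0 d a := by
  intro v
  show ¬ (stateAt G g0 d a v).hasMsg
  rw [h]
  exact ht v

end RDAF



/-- **EPA decidability via bounded-round characterisation (Theorem 7).** If the delay function
is eventually periodic with stabilisation round `c` and cycle length `l ≥ 1`, then flooding
terminates if and only if it has terminated by round `c + l·N`, where
`N = (2^{2|V|} + 1)^{|V|}`. -/
theorem RDAF.epa_decidable
    {V : Type*} [Fintype V] (G : SimpleGraph V) (g0 : V) (d : ℕ → V → Sym2 V → Bool)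
    (c l : ℕ) (hl : 1 ≤ l)
    (hper : ∀ i : ℕ, c ≤ i → ∀ u : V, ∀ e ∈ G.edgeSet, u ∈ e → d i u e = d (i + l) u e) :
    RDAF.Terminates G g0 d ↔
      RDAF.TerminatedBy G g0 d
        (c + l * (2 ^ (2 * Fintype.card V) + 1) ^ Fintype.card V) := by
  classical
  set n := Fintype.card V with hn
  set N := (2 ^ (2 * n) + 1) ^ n with hN
  constructor
  · rintro ⟨t, ht⟩
    -- pigeonhole: two of the states at rounds c, c+l, ..., c+Nl agree
    have hcard : Fintype.card (V → Option (Set V × Set V)) < Fintype.card (Fin (N + 1)) := by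
      rw [Fintype.card_fun, Fintype.card_option, Fintype.card_prod, Fintype.card_set,
        Fintype.card_fin]
      have : 2 ^ n * 2 ^ n = 2 ^ (2 * n) := by rw [← pow_add, two_mul]
      rw [this, ← hn, ← hN]
      omega
    obtain ⟨k1, k2, hne, hfeq⟩ := Fintype.exists_ne_map_eq_of_card_lt
      (fun k : Fin (N + 1) => fun u => RDAF.encode (RDAF.stateAt G g0 d (c + (k : ℕ) * l) u))
      hcard
    have hpair : ∃ i j : ℕ, i < j ∧ j ≤ N ∧
        RDAF.stateAt G g0 d (c + i * l) = RDAF.stateAt G g0 d (c + j * l) := by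
      rcases lt_or_gt_of_ne hne with hlt | hlt
      · exact ⟨k1, k2, hlt, Nat.lt_succ_iff.1 k2.2,
          RDAF.stateAt_eq_of_encode_eq G g0 d _ _ (fun u => congrFun hfeq u)⟩
      · exact ⟨k2, k1, hlt, Nat.lt_succ_iff.1 k1.2,
          RDAF.stateAt_eq_of_encode_eq G g0 d _ _ (fun u => congrFun hfeq.symm u)⟩
    obtain ⟨i, j, hij, hjN, hstate⟩ := hpair
    set p := (j - i) * l with hp
    have hkey : i * l + p = j * l := by
      rw [hp, ← Nat.add_mul]
      congr 1
      omega
    have hp1 : 1 ≤ p := Nat.mul_pos (by omega) hl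
    have h0 : RDAF.stateAt G g0 d (c + i * l)
        = RDAF.stateAt G g0 d (c + i * l + (j - i) * l) := by
      rw [show c + i * l + (j - i) * l = c + j * l by omega]
      exact hstate
    have hshift := RDAF.stateAt_shift G g0 d c l hper (j - i) (c + i * l)
      (Nat.le_add_right _ _) h0
    have hjlN : j * l ≤ N * l := Nat.mul_le_mul_right l hjN
    have main : ∀ k, RDAF.TerminatedBy G g0 d (c + i * l + k) →
        RDAF.TerminatedBy G g0 d (c + l * N) := by
      intro k
      induction k using Nat.strong_induction_on with
      | _ k ih =>
        intro hk
        by_cases hkp : k < p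
        · refine RDAF.terminatedBy_mono G g0 d ?_ hk
          have : l * N = N * l := Nat.mul_comm l N
          omega
        · push_neg at hkp
          have heq := hshift (k - p)
          rw [show c + i * l + (j - i) * l + (k - p) = c + i * l + k by omega] at heq
          exact ih (k - p) (by omega)
            (RDAF.terminatedBy_of_stateAt_eq G g0 d heq hk)
    have hT : RDAF.TerminatedBy G g0 d (max t (c + i * l)) :=
      RDAF.terminatedBy_mono G g0 d (le_max_left _ _) ht
    have := main (max t (c + i * l) - (c + i * l))
      (by rwa [show c + i * l + (max t (c + i * l) - (c + i * l)) = max t (c + i * l) by omega])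
    exact this
  · intro h
    exact ⟨_, h⟩
end
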